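/- The degenerate r-Whitney numbers of the second kind satisfy the recurrence W_{m,λ}^{(r)}(n+1,k) = W_{m,λ}^{(r)}(n,k−1) + (mk + r − nλ) W_{m,λ}^{(r)}(n,k), for all n ≥ 0 and k ≥ 1 (with the convention W_{m,λ}^{(r)}(n,j) = 0 for j < 0 or j > n, and W_{m,λ}^{(r)}(0,0) = 1). -/

import Mathlib

open Finset

/-- generalized falling factorial: (x)_{n,λ} = x(x-λ)···(x-(n-1)λ) -/
def dff (lam x : ℝ) (n : ℕ) : ℝ := ∏ i ∈ Finset.range n, (x - i * lam)

/-- generalized rising factorial: ⟨x⟩_{n,λ} = x(x+λ)···(x+(n-1)λ) -/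
def drf (lam x : ℝ) (n : ℕ) : ℝ := ∏ i ∈ Finset.range n, (x + i * lam)

/-!
Multiplying the expansion of `(mx+r)_{n,λ}` by `mx + r - nλ` gives `(mx+r)_{n+1,λ}`, and
`(mx + c)(x)_k = m (x)_{k+1} + (mk + c)(x)_k` rewrites the product in the falling-factorial
basis again. The recurrence is then a comparison of coefficients, which is legitimate because
the falling factorials are linearly independent as functions: evaluating at `x = k` kills every
`(x)_j` with `j > k` and leaves `k! ≠ 0` at `j = k`.
-/

lemma dff_succ (lam x : ℝ) (n : ℕ) : dff lam x (n + 1) = dff lam x n * (x - n * lam) := by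
  simp [dff, prod_range_succ]

lemma dff_one_natCast_self_ne_zero (k : ℕ) : dff 1 (k : ℝ) k ≠ 0 :=
  prod_ne_zero_iff.mpr fun i hi => by
    rw [mul_one, sub_ne_zero, Ne, Nat.cast_inj]
    exact (mem_range.mp hi).ne'

lemma dff_one_natCast_of_lt {j k : ℕ} (h : j < k) : dff 1 (j : ℝ) k = 0 :=
  prod_eq_zero (mem_range.mpr h) (by simp)

lemma mul_add_mul_dff_one (m c x : ℝ) (k : ℕ) :
    (m * x + c) * dff 1 x k = m * dff 1 x (k + 1) + (m * k + c) * dff 1 x k := by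
  rw [dff_succ]
  ring

lemma eq_zero_of_forall_sum_mul_dff_one_eq_zero {N : ℕ} {c : ℕ → ℝ}
    (h : ∀ x : ℝ, ∑ j ∈ range N, c j * dff 1 x j = 0) {k : ℕ} (hk : k < N) : c k = 0 := by
  induction k using Nat.strong_induction_on with
  | _ k ih =>
    have hk' := h k
    rw [sum_eq_single_of_mem k (mem_range.mpr hk) fun j _ hjk => ?_] at hk'
    · exact (mul_eq_zero.mp hk').resolve_right (dff_one_natCast_self_ne_zero k)
    · rcases lt_or_gt_of_ne hjk with hlt | hgt
      · rw [ih j hlt (hlt.trans hk), zero_mul]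
      · rw [dff_one_natCast_of_lt hgt, mul_zero]

lemma eq_of_forall_sum_mul_dff_one_eq {N : ℕ} {a b : ℕ → ℝ}
    (h : ∀ x : ℝ, ∑ j ∈ range N, a j * dff 1 x j = ∑ j ∈ range N, b j * dff 1 x j)
    {k : ℕ} (hk : k < N) : a k = b k :=
  sub_eq_zero.mp <| eq_zero_of_forall_sum_mul_dff_one_eq_zero (c := a - b)
    (fun x => by simp only [Pi.sub_apply, sub_mul, sum_sub_distrib, h x, sub_self]) hk

lemma sum_mul_dff_one_mul_add {N : ℕ} (a : ℕ → ℝ) (ha : a N = 0) (m c x : ℝ) :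
    (∑ j ∈ range N, a j * m ^ j * dff 1 x j) * (m * x + c)
      = ∑ j ∈ range (N + 1),
          ((if j = 0 then 0 else a (j - 1)) + (m * j + c) * a j) * m ^ j * dff 1 x j := by
  have hshift : ∑ j ∈ range (N + 1), (if j = 0 then 0 else a (j - 1)) * m ^ j * dff 1 x j
      = ∑ j ∈ range N, a j * m ^ (j + 1) * dff 1 x (j + 1) := by
    rw [sum_range_succ']
    simp
  have hlast : ∑ j ∈ range (N + 1), (m * j + c) * a j * m ^ j * dff 1 x j
      = ∑ j ∈ range N, (m * j + c) * a j * m ^ j * dff 1 x j := by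
    rw [sum_range_succ, ha, mul_zero, zero_mul, zero_mul, add_zero]
  calc (∑ j ∈ range N, a j * m ^ j * dff 1 x j) * (m * x + c)
      = ∑ j ∈ range N,
          (a j * m ^ (j + 1) * dff 1 x (j + 1) + (m * j + c) * a j * m ^ j * dff 1 x j) := by
        refine sum_mul .. |>.trans <| sum_congr rfl fun j _ => ?_
        rw [mul_assoc, mul_comm _ (m * x + c), mul_add_mul_dff_one]
        ring
    _ = _ := by
        rw [sum_add_distrib, ← hshift, ← hlast, ← sum_add_distrib]
        exact sum_congr rfl fun j _ => by ring

theorem stmt9_general (m : ℕ) (hm : 0 < m) (r : ℕ) (lam : ℝ) (W : ℕ → ℕ → ℝ)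
    (hW : ∀ n : ℕ, ∀ x : ℝ,
      dff lam ((m : ℝ) * x + r) n = ∑ k ∈ range (n + 1), W n k * (m : ℝ) ^ k * dff 1 x k)
    (hzero : ∀ n k : ℕ, n < k → W n k = 0) :
    ∀ n k : ℕ, 1 ≤ k →
      W (n + 1) k = W n (k - 1) + ((m : ℝ) * k + r - n * lam) * W n k := by
  intro n k hk
  rcases lt_or_ge k (n + 2) with hkn | hkn
  · have hexp (x : ℝ) := calc
        ∑ j ∈ range (n + 2), W (n + 1) j * (m : ℝ) ^ j * dff 1 x j
          = dff lam (m * x + r) n * (m * x + (r - n * lam)) := by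
            rw [← hW, dff_succ, add_sub_assoc]
        _ = _ := by rw [hW, sum_mul_dff_one_mul_add _ (hzero n (n + 1) n.lt_succ_self)]
    have hcoeff := eq_of_forall_sum_mul_dff_one_eq (a := fun j => W (n + 1) j * (m : ℝ) ^ j)
      (b := fun j => ((if j = 0 then 0 else W n (j - 1)) + (m * j + (r - n * lam)) * W n j)
        * (m : ℝ) ^ j) hexp hkn
    rw [if_neg (by omega)] at hcoeff
    have hmk : (m : ℝ) ^ k ≠ 0 := by positivity
    linear_combination (mul_right_cancel₀ hmk hcoeff)
  · rw [hzero (n + 1) k (by omega), hzero n (k - 1) (by omega), hzero n k (by omega)]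
    ring

theorem stmt9 (m : ℕ) (hm : 0 < m) (r : ℕ) (lam : ℝ) (W : ℕ → ℕ → ℝ)
    (hW : ∀ n : ℕ, ∀ x : ℝ,
      dff lam ((m : ℝ) * x + r) n = ∑ k ∈ range (n + 1), W n k * (m : ℝ) ^ k * dff 1 x k)
    (hzero : ∀ n k : ℕ, n < k → W n k = 0)
    (hW00 : W 0 0 = 1) :
    ∀ n k : ℕ, 1 ≤ k →
      W (n + 1) k = W n (k - 1) + ((m : ℝ) * k + r - n * lam) * W n k :=
  stmt9_general m hm r lam W hW hzero
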